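/- Let m ≥ 1 be an integer, L ≥ m a real number, n ≥ 1 an integer, and Z₁, …, Z_n m×m Hermitian positive definite complex matrices. Then the sample mean Σ̂ := n⁻¹·∑_{k=1}^n Z_k is Hermitian positive definite, and the log-likelihood function ℓ(Σ) := ∑_{k=1}^n log f(Z_k;Σ,L), defined on m×m Hermitian positive definite complex matrices Σ, attains its unique maximum at Σ = Σ̂; that is, ℓ(Σ) ≤ ℓ(Σ̂) for every Hermitian positive definite Σ, with equality if and only if Σ = Σ̂. -/

import Mathlib

open Matrix ComplexOrder

/-- Real (positive) determinant of a Hermitian positive definite complex matrix. -/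
noncomputable def pdet {m : ℕ} (A : Matrix (Fin m) (Fin m) ℂ) : ℝ := A.det.re

/-- Real trace. -/
noncomputable def rtrace {m : ℕ} (A : Matrix (Fin m) (Fin m) ℂ) : ℝ := A.trace.re

/-- Multivariate gamma function Γ_m(L) = π^{m(m−1)/2} ∏_{i=0}^{m−1} Γ(L−i). -/
noncomputable def mGamma (m : ℕ) (L : ℝ) : ℝ :=
  Real.pi ^ (m * (m - 1) / 2) * ∏ i ∈ Finset.range m, Real.Gamma (L - i)

/-- Scaled complex Wishart density. -/
noncomputable def wdens (m : ℕ) (L : ℝ) (S Z : Matrix (Fin m) (Fin m) ℂ) : ℝ :=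
  L ^ ((m : ℝ) * L) * pdet Z ^ (L - (m : ℝ)) * Real.exp (-(L * rtrace (S⁻¹ * Z)))
    / (pdet S ^ L * mGamma m L)

/-!
Up to an additive constant, the log-likelihood is `-nL (tr (Σ⁻¹ Σ̂) + log det Σ)`. With
`R = Σ̂ ^ (1/2)`, the matrix `Σ⁻¹ Σ̂` is similar to the positive definite `R Σ⁻¹ R`, whose
eigenvalues `λᵢ > 0` satisfy `tr - log det = ∑ (λᵢ - log λᵢ) ≥ m` by `log x ≤ x - 1`, with
equality iff every `λᵢ = 1`, i.e. iff `Σ = Σ̂`.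
-/

namespace Real

lemma sum_one_add_log_le_sum {ι : Type*} (s : Finset ι) {x : ι → ℝ} (hx : ∀ i ∈ s, 0 < x i) :
    ∑ i ∈ s, (1 + log (x i)) ≤ ∑ i ∈ s, x i :=
  Finset.sum_le_sum fun i hi => by linarith [log_le_sub_one_of_pos (hx i hi)]

lemma sum_one_add_log_eq_sum_iff {ι : Type*} (s : Finset ι) {x : ι → ℝ}
    (hx : ∀ i ∈ s, 0 < x i) :
    ∑ i ∈ s, (1 + log (x i)) = ∑ i ∈ s, x i ↔ ∀ i ∈ s, x i = 1 := by
  rw [Finset.sum_eq_sum_iff_of_le fun i hi => by linarith [log_le_sub_one_of_pos (hx i hi)]]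
  refine forall₂_congr fun i hi => ⟨fun h => ?_, fun h => by simp [h]⟩
  by_contra hne
  linarith [log_lt_sub_one_of_pos (hx i hi) hne]

end Real

namespace Matrix

variable {n : Type*} [Fintype n] [DecidableEq n]

lemma conj_eq_one_iff {α : Type*} [CommRing α] {R : Matrix n n α} (hR : IsUnit R)
    {M : Matrix n n α} : R * M * R⁻¹ = 1 ↔ M = 1 := by
  rw [← hR.unit_spec, ← coe_units_inv, Units.mul_inv_eq_one]
  exact hR.unit.isUnit.mul_eq_left

lemma inv_mul_eq_one_iff {α : Type*} [CommRing α] {P : Matrix n n α} (hP : IsUnit P)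
    {Q : Matrix n n α} : P⁻¹ * Q = 1 ↔ P = Q := by
  rw [← hP.unit_spec, ← coe_units_inv, Units.inv_mul_eq_one]

variable {𝕜 : Type*} [RCLike 𝕜]

open RCLike

lemma IsHermitian.re_trace_eq_sum_eigenvalues {A : Matrix n n 𝕜} (hA : A.IsHermitian) :
    re A.trace = ∑ i, hA.eigenvalues i := by
  simp [hA.trace_eq_sum_eigenvalues]

lemma IsHermitian.eq_one_of_eigenvalues_eq_one {A : Matrix n n 𝕜} (hA : A.IsHermitian)
    (h : ∀ i, hA.eigenvalues i = 1) : A = 1 := by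
  rw [hA.spectral_theorem, show hA.eigenvalues = 1 from funext h]
  simp

namespace PosDef

variable {A P Q : Matrix n n 𝕜}

lemma re_det_pos (hA : A.PosDef) : 0 < re A.det := (RCLike.pos_iff.mp hA.det_pos).1

lemma ofReal_re_det (hA : A.PosDef) : ((re A.det : ℝ) : 𝕜) = A.det :=
  RCLike.conj_eq_iff_re.mp (RCLike.conj_eq_iff_im.mpr (RCLike.pos_iff.mp hA.det_pos).2)

lemma card_add_log_re_det_eq_sum (hA : A.PosDef) :
    (Fintype.card n : ℝ) + Real.log (re A.det) = ∑ i, (1 + Real.log (hA.1.eigenvalues i)) := by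
  rw [Finset.sum_add_distrib, hA.1.det_eq_prod_eigenvalues, ← ofReal_prod, ofReal_re,
    Real.log_prod fun i _ => (hA.eigenvalues_pos i).ne']
  simp

theorem card_add_log_re_det_le_re_trace (hA : A.PosDef) :
    (Fintype.card n : ℝ) + Real.log (re A.det) ≤ re A.trace := by
  rw [hA.card_add_log_re_det_eq_sum, hA.1.re_trace_eq_sum_eigenvalues]
  exact Real.sum_one_add_log_le_sum _ fun i _ => hA.eigenvalues_pos i

theorem re_trace_eq_card_add_log_re_det_iff (hA : A.PosDef) :
    re A.trace = Fintype.card n + Real.log (re A.det) ↔ A = 1 := by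
  refine ⟨fun h => hA.1.eq_one_of_eigenvalues_eq_one fun i => ?_, ?_⟩
  · rw [hA.card_add_log_re_det_eq_sum, hA.1.re_trace_eq_sum_eigenvalues, eq_comm,
      Real.sum_one_add_log_eq_sum_iff _ fun i _ => hA.eigenvalues_pos i] at h
    exact h i (Finset.mem_univ i)
  · rintro rfl
    simp

open scoped MatrixOrder in
lemma exists_isUnit_posDef_conj_inv_mul (hP : P.PosDef) (hQ : Q.PosDef) :
    ∃ R : Matrix n n 𝕜, IsUnit R ∧ (R * (P⁻¹ * Q) * R⁻¹).PosDef := by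
  obtain ⟨R, hRH, hRR⟩ : ∃ R : Matrix n n 𝕜, R.IsHermitian ∧ R * R = Q :=
    ⟨CFC.sqrt Q, (CFC.sqrt_nonneg Q).posSemidef.1, CFC.sqrt_mul_sqrt_self Q hQ.posSemidef.nonneg⟩
  have hR : IsUnit R := isUnit_of_mul_isUnit_left (hRR ▸ hQ.isUnit)
  have hconj : R * (P⁻¹ * Q) * R⁻¹ = Rᴴ * P⁻¹ * R := by
    rw [hRH.eq, ← hRR]
    simp only [Matrix.mul_assoc, mul_nonsing_inv _ ((isUnit_iff_isUnit_det R).mp hR),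
      Matrix.mul_one]
  exact ⟨R, hR, hconj ▸ hP.inv.conjTranspose_mul_mul_same (mulVec_injective_of_isUnit hR)⟩

lemma re_det_inv_mul (hP : P.PosDef) (hQ : Q.PosDef) :
    re (P⁻¹ * Q).det = re Q.det / re P.det := by
  rw [det_mul, det_nonsing_inv, Ring.inverse_eq_inv', ← hP.ofReal_re_det, ← hQ.ofReal_re_det,
    ← ofReal_inv, ← ofReal_mul, ofReal_re, ofReal_re, ofReal_re, div_eq_inv_mul]

lemma log_re_det_inv_mul (hP : P.PosDef) (hQ : Q.PosDef) :
    Real.log (re (P⁻¹ * Q).det) = Real.log (re Q.det) - Real.log (re P.det) := by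
  rw [hP.re_det_inv_mul hQ, Real.log_div hQ.re_det_pos.ne' hP.re_det_pos.ne']

theorem card_add_log_re_det_le_re_trace_inv_mul_add_log_re_det (hP : P.PosDef)
    (hQ : Q.PosDef) :
    (Fintype.card n : ℝ) + Real.log (re Q.det) ≤ re (P⁻¹ * Q).trace + Real.log (re P.det) := by
  obtain ⟨R, hR, hA⟩ := exists_isUnit_posDef_conj_inv_mul hP hQ
  have h := hA.card_add_log_re_det_le_re_trace
  rw [trace_conj hR, det_conj hR, hP.log_re_det_inv_mul hQ] at h
  linarith

theorem re_trace_inv_mul_add_log_re_det_eq_iff (hP : P.PosDef) (hQ : Q.PosDef) :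
    re (P⁻¹ * Q).trace + Real.log (re P.det) = Fintype.card n + Real.log (re Q.det) ↔
      P = Q := by
  obtain ⟨R, hR, hA⟩ := exists_isUnit_posDef_conj_inv_mul hP hQ
  have h := hA.re_trace_eq_card_add_log_re_det_iff
  rw [trace_conj hR, det_conj hR, hP.log_re_det_inv_mul hQ, ← add_sub_assoc, eq_sub_iff_add_eq,
    conj_eq_one_iff hR, inv_mul_eq_one_iff hP.isUnit] at h
  exact h

end PosDef

end Matrix

lemma pdet_pos {m : ℕ} {A : Matrix (Fin m) (Fin m) ℂ} (hA : A.PosDef) : 0 < pdet A :=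
  hA.re_det_pos

lemma rtrace_inv_mul_self {m : ℕ} {A : Matrix (Fin m) (Fin m) ℂ} (hA : A.PosDef) :
    rtrace (A⁻¹ * A) = m := by
  simp [rtrace, nonsing_inv_mul _ ((isUnit_iff_isUnit_det A).mp hA.isUnit)]

lemma mGamma_pos {m : ℕ} {L : ℝ} (h : (m : ℝ) - 1 < L) : 0 < mGamma m L := by
  refine mul_pos (pow_pos Real.pi_pos _) (Finset.prod_pos fun i hi => Real.Gamma_pos_of_pos ?_)
  have : (i : ℝ) + 1 ≤ m := by exact_mod_cast Finset.mem_range.mp hi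
  linarith

section LogLikelihood

open Real

variable {m : ℕ} {L : ℝ}

lemma log_wdens (hL : 0 < L) (hmL : (m : ℝ) - 1 < L) {S Z : Matrix (Fin m) (Fin m) ℂ}
    (hS : S.PosDef) (hZ : Z.PosDef) :
    log (wdens m L S Z) = m * L * log L + (L - m) * log (pdet Z) - log (mGamma m L)
      - L * (rtrace (S⁻¹ * Z) + log (pdet S)) := by
  have hZ0 := pdet_pos hZ
  have hS0 := pdet_pos hS
  have hΓ := mGamma_pos hmL
  rw [wdens, log_div (by positivity) (by positivity), log_mul (by positivity) (by positivity),
    log_mul (by positivity) (by positivity), log_mul (by positivity) hΓ.ne', log_exp,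
    log_rpow hL, log_rpow hZ0, log_rpow hS0]
  ring

lemma exists_sum_log_wdens_eq {ι : Type*} [Fintype ι] (hL : 0 < L) (hmL : (m : ℝ) - 1 < L)
    {Z : ι → Matrix (Fin m) (Fin m) ℂ} (hZ : ∀ k, (Z k).PosDef) :
    ∃ c : ℝ, ∀ S : Matrix (Fin m) (Fin m) ℂ, S.PosDef →
      ∑ k, log (wdens m L S (Z k)) =
        c - L * (rtrace (S⁻¹ * ∑ k, Z k) + Fintype.card ι * log (pdet S)) := by
  refine ⟨∑ k, (m * L * log L + (L - m) * log (pdet (Z k)) - log (mGamma m L)), fun S hS => ?_⟩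
  simp_rw [log_wdens hL hmL hS (hZ _)]
  rw [Finset.sum_sub_distrib, ← Finset.mul_sum, Finset.sum_add_distrib, Finset.sum_const,
    Finset.card_univ, nsmul_eq_mul, rtrace, Matrix.mul_sum, trace_sum, Complex.re_sum]
  rfl

end LogLikelihood

theorem stmt7 (m : ℕ) (hm : 1 ≤ m) (L : ℝ) (hL : (m : ℝ) ≤ L)
    (n : ℕ) (hn : 1 ≤ n) (Z : Fin n → Matrix (Fin m) (Fin m) ℂ)
    (hZ : ∀ k, (Z k).PosDef)
    (Shat : Matrix (Fin m) (Fin m) ℂ)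
    (hShat : Shat = ((n : ℂ))⁻¹ • ∑ k, Z k) :
    Shat.PosDef ∧
    ∀ S : Matrix (Fin m) (Fin m) ℂ, S.PosDef →
      (∑ k, Real.log (wdens m L S (Z k))) ≤ (∑ k, Real.log (wdens m L Shat (Z k))) ∧
      ((∑ k, Real.log (wdens m L S (Z k))) = (∑ k, Real.log (wdens m L Shat (Z k)))
        ↔ S = Shat) := by
  have hL0 : 0 < L := by linarith [show (1 : ℝ) ≤ m by exact_mod_cast hm]
  have hnL : 0 < n * L := mul_pos (by exact_mod_cast hn) hL0
  have hShatPD : Shat.PosDef := hShat ▸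
    (posDef_sum ⟨⟨0, hn⟩, Finset.mem_univ _⟩ fun k _ => hZ k).smul
      (inv_pos.mpr (by exact_mod_cast hn))
  have hsum : ∑ k, Z k = (n : ℂ) • Shat := by
    rw [hShat, smul_smul, mul_inv_cancel₀ (Nat.cast_ne_zero.mpr (by omega)), one_smul]
  obtain ⟨c, hc⟩ := exists_sum_log_wdens_eq hL0 (by linarith) hZ
  have hℓ : ∀ S : Matrix (Fin m) (Fin m) ℂ, S.PosDef → ∑ k, Real.log (wdens m L S (Z k)) =
      c - n * L * (rtrace (S⁻¹ * Shat) + Real.log (pdet S)) := by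
    intro S hS
    rw [hc S hS, hsum, Matrix.mul_smul, rtrace, trace_smul, smul_eq_mul, ← Complex.ofReal_natCast,
      Complex.re_ofReal_mul, Fintype.card_fin, ← rtrace]
    ring
  refine ⟨hShatPD, fun S hS => ?_⟩
  have hle : (m : ℝ) + Real.log (pdet Shat) ≤ rtrace (S⁻¹ * Shat) + Real.log (pdet S) := by
    simpa [pdet, rtrace] using hS.card_add_log_re_det_le_re_trace_inv_mul_add_log_re_det hShatPD
  have hiff : rtrace (S⁻¹ * Shat) + Real.log (pdet S) = m + Real.log (pdet Shat) ↔ S = Shat := by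
    simpa [pdet, rtrace] using hS.re_trace_inv_mul_add_log_re_det_eq_iff hShatPD
  rw [hℓ S hS, hℓ Shat hShatPD, rtrace_inv_mul_self hShatPD, sub_right_inj,
    mul_right_inj' hnL.ne', hiff]
  exact ⟨sub_le_sub_left (mul_le_mul_of_nonneg_left hle hnL.le) c, Iff.rfl⟩
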